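/- arXiv:1411.0120 — 9 statements merged into one kernel-verified Lean document; each statement's English description precedes it below -/
import Mathlib

section
/- (Shifting lemma) For any finite set A and any family C ⊆ P(A), there exists a family C' ⊆ P(A) such that: (1) |C'| = |C|; (2) every set shattered by C' is shattered by C; (3) C' is downward closed (if B ⊆ C ∈ C' then B ∈ C'). -/
/-- `𝒞` shatters the finite set `B` if every subset of `B` is a trace of a member of `𝒞`. -/
def Shatters {α : Type*} [DecidableEq α] (𝒞 : Finset (Finset α)) (B : Finset α) : Prop :=
  ∀ B' ⊆ B, ∃ C ∈ 𝒞, C ∩ B = B'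

section
open Finset FinsetFamily

/-- Our `Shatters` agrees with Mathlib's. -/
lemma shatters_iff_shatters {α : Type*} [DecidableEq α] (𝒞 : Finset (Finset α)) (B : Finset α) :
    _root_.Shatters 𝒞 B ↔ 𝒞.Shatters B := by
  constructor
  · intro h t ht
    obtain ⟨C, hC, hCB⟩ := h t ht
    exact ⟨C, hC, by rwa [Finset.inter_comm]⟩
  · intro h t ht
    obtain ⟨C, hC, hCB⟩ := h ht
    exact ⟨C, hC, by rwa [Finset.inter_comm]⟩

lemma compression_eq_image {α : Type*} [DecidableEq α] (a : α) (𝒜 : Finset (Finset α)) :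
    𝓓 a 𝒜 = 𝒜.image (fun s => if s.erase a ∈ 𝒜 then s else s.erase a) := by
  ext t
  rw [Down.mem_compression, mem_image]
  constructor
  · rintro (⟨h1, h2⟩ | ⟨h1, h2⟩)
    · exact ⟨t, h1, by rw [if_pos h2]⟩
    · have ha : a ∉ t := fun ha => h1 (by rwa [insert_eq_of_mem ha] at h2)
      refine ⟨insert a t, h2, ?_⟩
      rw [erase_insert ha, if_neg h1]
  · rintro ⟨s, hs, rfl⟩
    by_cases h : s.erase a ∈ 𝒜
    · rw [if_pos h]; exact Or.inl ⟨hs, h⟩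
    · rw [if_neg h, erase_idem]
      refine Or.inr ⟨h, ?_⟩
      have ha : a ∈ s := by
        by_contra ha
        exact h (by rwa [erase_eq_of_notMem ha])
      rwa [insert_erase ha]

lemma sum_card_compression_lt {α : Type*} [DecidableEq α] (a : α) (𝒜 : Finset (Finset α))
    (h : 𝓓 a 𝒜 ≠ 𝒜) :
    ∑ s ∈ 𝓓 a 𝒜, s.card < ∑ s ∈ 𝒜, s.card := by
  classical
  set φ : Finset α → Finset α := fun s => if s.erase a ∈ 𝒜 then s else s.erase a with hφ
  have hinj : Set.InjOn φ 𝒜 := by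
    intro s hs t ht hst
    simp only [hφ] at hst
    split_ifs at hst with h1 h2 h2
    · exact hst
    · exact absurd (hst ▸ hs) h2
    · exact absurd (hst ▸ ht) h1
    · have has : a ∈ s := by
        by_contra ha; exact h1 (by rwa [erase_eq_of_notMem ha])
      have hat : a ∈ t := by
        by_contra ha; exact h2 (by rwa [erase_eq_of_notMem ha])
      rw [← insert_erase has, ← insert_erase hat, hst]
  rw [compression_eq_image, Finset.sum_image (fun x hx y hy => hinj hx hy)]
  -- now ∑ s ∈ 𝒜, (φ s).card < ∑ s ∈ 𝒜, s.card
  have hne : ∃ s ∈ 𝒜, φ s ≠ s := by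
    by_contra hc
    push_neg at hc
    apply h
    rw [compression_eq_image]
    ext t
    rw [mem_image]
    constructor
    · rintro ⟨s, hs, rfl⟩; rw [show (if s.erase a ∈ 𝒜 then s else s.erase a) = φ s from rfl, hc s hs]; exact hs
    · intro ht; exact ⟨t, ht, hc t ht⟩
  obtain ⟨s₀, hs₀, hs₀ne⟩ := hne
  have key : ∀ s ∈ 𝒜, (φ s).card ≤ s.card := by
    intro s hs
    simp only [hφ]
    split_ifs
    · exact le_refl _
    · exact card_le_card (erase_subset _ _)
  refine Finset.sum_lt_sum key ⟨s₀, hs₀, ?_⟩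
  simp only [hφ] at hs₀ne ⊢
  split_ifs at hs₀ne ⊢ with h1
  · exact absurd rfl hs₀ne
  · have has : a ∈ s₀ := by
      by_contra ha; exact hs₀ne (erase_eq_of_notMem ha)
    exact card_erase_lt_of_mem has

lemma downward_closed_of_fixed {α : Type*} [DecidableEq α] (𝒞 : Finset (Finset α))
    (h : ∀ a : α, ∀ s ∈ 𝒞, s.erase a ∈ 𝒞) :
    ∀ B C : Finset α, B ⊆ C → C ∈ 𝒞 → B ∈ 𝒞 := by
  intro B C
  induction C using Finset.strongInduction with
  | _ C ih =>
    intro hBC hC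
    rcases eq_or_ssubset_of_subset hBC with rfl | hlt
    · exact hC
    · obtain ⟨a, haC, haB⟩ := exists_of_ssubset hlt
      exact ih (C.erase a) (erase_ssubset haC) (subset_erase.2 ⟨hBC, haB⟩) (h a C hC)

lemma main_aux {α : Type*} [DecidableEq α] (A : Finset α) :
    ∀ n : ℕ, ∀ 𝒞 : Finset (Finset α), (∑ s ∈ 𝒞, s.card) = n → (∀ C ∈ 𝒞, C ⊆ A) →
    ∃ 𝒞' : Finset (Finset α), (∀ C ∈ 𝒞', C ⊆ A) ∧ 𝒞'.card = 𝒞.card ∧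
      (∀ B : Finset α, _root_.Shatters 𝒞' B → _root_.Shatters 𝒞 B) ∧
      (∀ B C : Finset α, B ⊆ C → C ∈ 𝒞' → B ∈ 𝒞') := by
  intro n
  induction n using Nat.strong_induction_on with
  | _ n ih =>
    intro 𝒞 hn hsub
    by_cases hfix : ∀ a ∈ A, 𝓓 a 𝒞 = 𝒞
    · refine ⟨𝒞, hsub, rfl, fun B h => h, ?_⟩
      apply downward_closed_of_fixed
      intro a s hs
      by_cases haA : a ∈ A
      · rw [← hfix a haA]
        exact Down.erase_mem_compression hs
      · rwa [erase_eq_of_notMem (fun ha => haA (hsub s hs ha))]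
    · push_neg at hfix
      obtain ⟨a, haA, hne⟩ := hfix
      have hlt := sum_card_compression_lt a 𝒞 hne
      rw [hn] at hlt
      have hsub' : ∀ C ∈ 𝓓 a 𝒞, C ⊆ A := by
        intro C hC
        rw [Down.mem_compression] at hC
        rcases hC with ⟨h1, _⟩ | ⟨_, h2⟩
        · exact hsub C h1
        · exact (subset_insert a C).trans (hsub _ h2)
      obtain ⟨𝒞', h1, h2, h3, h4⟩ := ih _ hlt (𝓓 a 𝒞) rfl hsub'
      refine ⟨𝒞', h1, h2.trans (Down.card_compression a 𝒞), fun B hB => ?_, h4⟩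
      rw [shatters_iff_shatters]
      exact Finset.Shatters.of_compression ((shatters_iff_shatters _ _).1 (h3 B hB))

end

/-- Shifting lemma: for any finite set `A` and family `𝒞` of subsets of `A` there is a family
`𝒞'` of subsets of `A` of the same cardinality, shattering no more sets than `𝒞`, and
downward closed. -/
theorem stmt_1 {α : Type*} [DecidableEq α] (A : Finset α) (𝒞 : Finset (Finset α))
    (hsub : ∀ C ∈ 𝒞, C ⊆ A) :
    ∃ 𝒞' : Finset (Finset α), (∀ C ∈ 𝒞', C ⊆ A) ∧ 𝒞'.card = 𝒞.card ∧
      (∀ B : Finset α, Shatters 𝒞' B → Shatters 𝒞 B) ∧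
      (∀ B C : Finset α, B ⊆ C → C ∈ 𝒞' → B ∈ 𝒞') := by
  exact main_aux A _ 𝒞 rfl hsub
end

section
/- (Sauer–Shelah lemma) If C ⊆ P(X) shatters no subset of size d+1 (i.e., VC-dimension at most d), then for any finite A ⊆ X with |A| = m ≥ d, the number of distinct traces |{C ∩ A : C ∈ C}| is at most the sum over i ≤ d of binomial(m, i). -/
/-- A family of sets `𝒞` shatters `A` if every subset of `A` is the trace on `A`
of some member of `𝒞`. -/
def SShatters {α : Type*} (𝒞 : Set (Set α)) (A : Set α) : Prop :=
  ∀ B ⊆ A, ∃ C ∈ 𝒞, C ∩ A = B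

open Finset

/-- Sauer–Shelah lemma: if `𝒞` shatters no set of size `d + 1` (VC-dimension at most `d`),
then for any finite `A ⊆ X` with `|A| = m ≥ d`, the number of traces of `𝒞` on `A` is at
most `∑_{i ≤ d} (m choose i)`. -/
theorem stmt_2 {X : Type*} (𝒞 : Set (Set X)) (d : ℕ)
    (h : ∀ A : Finset X, A.card = d + 1 → ¬ SShatters 𝒞 ↑A) :
    ∀ (m : ℕ) (A : Finset X), d ≤ m → A.card = m →
      Set.ncard {s : Set X | ∃ C ∈ 𝒞, s = C ∩ ↑A} ≤ ∑ i ∈ Finset.range (d + 1), m.choose i := by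
  classical
  intro m A hdm hAm
  set 𝒯 : Finset (Finset X) :=
    A.powerset.filter (fun t => ∃ C ∈ 𝒞, (↑t : Set X) = C ∩ ↑A) with h𝒯
  -- Step 1: the set of traces has ncard ≤ #𝒯
  have hset : {s : Set X | ∃ C ∈ 𝒞, s = C ∩ ↑A} = (fun t : Finset X => (↑t : Set X)) '' ↑𝒯 := by
    ext s
    simp only [Set.mem_setOf_eq, Set.mem_image, mem_coe, h𝒯, mem_filter, mem_powerset]
    constructor
    · rintro ⟨C, hC, rfl⟩
      refine ⟨A.filter (· ∈ C), ⟨filter_subset _ _, C, hC, ?_⟩, ?_⟩ <;>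
      · ext x; simp [and_comm]
    · rintro ⟨t, ⟨-, C, hC, ht⟩, rfl⟩
      exact ⟨C, hC, ht⟩
  have h1 : Set.ncard {s : Set X | ∃ C ∈ 𝒞, s = C ∩ ↑A} ≤ #𝒯 := by
    rw [hset]
    calc ((fun t : Finset X => (↑t : Set X)) '' ↑𝒯).ncard
        ≤ (↑𝒯 : Set (Finset X)).ncard := Set.ncard_image_le 𝒯.finite_toSet
      _ = #𝒯 := by simp
  -- Step 2: Pajor
  have h2 : #𝒯 ≤ #𝒯.shatterer := card_le_card_shatterer 𝒯
  -- Step 3: every shattered set has size ≤ d and is a subset of A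
  have h3 : ∀ s ∈ 𝒯.shatterer, s ⊆ A ∧ #s ≤ d := by
    intro s hs
    rw [mem_shatterer] at hs
    obtain ⟨u, hu, hsu⟩ := hs.exists_superset
    have hsA : s ⊆ A := hsu.trans (mem_powerset.1 (mem_filter.1 hu).1)
    refine ⟨hsA, ?_⟩
    by_contra hcard
    push_neg at hcard
    obtain ⟨s', hs's, hs'⟩ := exists_subset_card_eq (show d+1 ≤ #s from hcard)
    have hsh : 𝒯.Shatters s' := hs.mono_right hs's
    refine h s' hs' ?_
    intro B hB
    have hBfin : (B : Set X).Finite := (s'.finite_toSet.subset hB)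
    obtain ⟨u, hu, hsu⟩ := hsh (t := s'.filter (· ∈ B)) (filter_subset _ _)
    obtain ⟨-, C, hC, hCu⟩ := mem_filter.1 hu
    refine ⟨C, hC, ?_⟩
    have hs'A : (↑s' : Set X) ⊆ ↑A :=
      Set.Subset.trans (by exact_mod_cast hs's) (by exact_mod_cast hsA)
    calc C ∩ ↑s' = (C ∩ ↑A) ∩ ↑s' := by
          rw [Set.inter_assoc, Set.inter_eq_right.2 hs'A]
      _ = ↑u ∩ ↑s' := by rw [hCu]
      _ = ↑(s' ∩ u) := by rw [← coe_inter, inter_comm]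
      _ = ↑(s'.filter (· ∈ B)) := by rw [hsu]
      _ = B := by ext x; simp; intro hx; exact hB hx
  -- bound shatterer
  have h4 : 𝒯.shatterer ⊆ (Finset.range (d+1)).biUnion (fun i => A.powersetCard i) := by
    intro s hs
    obtain ⟨hsA, hsd⟩ := h3 s hs
    exact mem_biUnion.2 ⟨#s, mem_range.2 (Nat.lt_succ_of_le hsd), mem_powersetCard.2 ⟨hsA, rfl⟩⟩
  calc Set.ncard {s : Set X | ∃ C ∈ 𝒞, s = C ∩ ↑A} ≤ #𝒯.shatterer := h1.trans h2
    _ ≤ #((Finset.range (d+1)).biUnion (fun i => A.powersetCard i)) := card_le_card h4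
    _ ≤ ∑ i ∈ Finset.range (d + 1), #(A.powersetCard i) := card_biUnion_le
    _ = ∑ i ∈ Finset.range (d + 1), m.choose i := by
        simp [card_powersetCard, hAm]
end

section
/- (Generalized Sauer–Shelah) Let C ⊆ P(X_0 × ⋯ × X_{n-1}) with VC_n(C) ≤ d, and let z = z_n(m, d+1) be the Zarankiewicz number. Then for every m ≥ d, π_{C,n}(m) ≤ Σ_{i < z} binomial(m^n, i). -/
/-- `A` is a box of size `m` in the product `∏ i, X i`: each side has `m` elements. -/
def IsBox {n : ℕ} {X : Fin n → Type*} (A : ∀ i, Finset (X i)) (m : ℕ) : Prop :=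
  ∀ i, (A i).card = m

/-- The subset of the product determined by a box. -/
def boxSet {n : ℕ} {X : Fin n → Type*} (A : ∀ i, Finset (X i)) : Set (∀ i, X i) :=
  {f | ∀ i, f i ∈ A i}

/-- The traces of a family `𝒞` on the box `A`. -/
def traces {n : ℕ} {X : Fin n → Type*} (𝒞 : Set (Set (∀ i, X i)))
    (A : ∀ i, Finset (X i)) : Set (Set (∀ i, X i)) :=
  {s | ∃ C ∈ 𝒞, s = C ∩ boxSet A}

/-- `𝒞` shatters the box `A`. -/
def ShattersBox {n : ℕ} {X : Fin n → Type*} (𝒞 : Set (Set (∀ i, X i)))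
    (A : ∀ i, Finset (X i)) : Prop :=
  ∀ B ⊆ boxSet A, ∃ C ∈ 𝒞, C ∩ boxSet A = B

/-- An `n`-partite `n`-uniform hypergraph with parts of size `m` (modelled with all parts
equal to `Fin m` and edge set `E`) contains a complete `n`-partite subhypergraph with all
parts of size `d`. -/
def ContainsComplete (n m : ℕ) (E : Finset (Fin n → Fin m)) (d : ℕ) : Prop :=
  ∃ B : Fin n → Finset (Fin m), (∀ i, (B i).card = d) ∧
    ∀ f : Fin n → Fin m, (∀ i, f i ∈ B i) → f ∈ E

/-- The Zarankiewicz number `z_n(m, d)`: the least `z` such that every `n`-partite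
`n`-uniform hypergraph with parts of size `m` and at least `z` edges contains a complete
`n`-partite subhypergraph with all parts of size `d`. -/
noncomputable def zar (n m d : ℕ) : ℕ :=
  sInf {z : ℕ | ∀ E : Finset (Fin n → Fin m), z ≤ E.card → ContainsComplete n m E d}


/-!
Identify the box `A` with the finite set `∏ i, A i` of size `m ^ n`. By the threshold form of the
Sauer–Shelah lemma, the number of traces is at most `∑_{i < z} (m^n choose i)` as soon as every
subset of the box shattered by `𝒞` has fewer than `z` points. Take `z = z_n(m, d + 1)`: a shattered
subset with `z` points, viewed as an `n`-partite hypergraph on the sides of `A`, contains a box of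
size `d + 1`, which would then be shattered too, contradicting `VC_n(𝒞) ≤ d`.
-/

def ShattersSet {α : Type*} (𝒞 : Set (Set α)) (T : Set α) : Prop :=
  ∀ B ⊆ T, ∃ C ∈ 𝒞, C ∩ T = B

theorem ShattersSet.mono {α : Type*} {𝒞 : Set (Set α)} {T T' : Set α} (h : ShattersSet 𝒞 T)
    (hT' : T' ⊆ T) : ShattersSet 𝒞 T' := by
  intro B hB
  obtain ⟨C, hC, hCT⟩ := h B (hB.trans hT')
  refine ⟨C, hC, ?_⟩
  rw [← Set.inter_eq_right.2 hT', ← Set.inter_assoc, hCT, Set.inter_eq_left.2 hB]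

theorem Finset.card_le_sum_choose_of_shatters_card_lt {α : Type*} [DecidableEq α]
    {𝒜 : Finset (Finset α)} {Y : Finset α} {z : ℕ} (h𝒜 : ∀ u ∈ 𝒜, u ⊆ Y)
    (hz : ∀ S, 𝒜.Shatters S → S.card < z) :
    𝒜.card ≤ ∑ i ∈ Finset.range z, Y.card.choose i := by
  have hshatterer : 𝒜.shatterer ⊆ (Finset.range z).biUnion Y.powersetCard := by
    intro S hS
    have hS := Finset.mem_shatterer.1 hS
    obtain ⟨u, hu, hSu⟩ := hS.exists_superset
    exact Finset.mem_biUnion.2 ⟨S.card, Finset.mem_range.2 (hz S hS),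
      Finset.mem_powersetCard.2 ⟨hSu.trans (h𝒜 u hu), rfl⟩⟩
  calc 𝒜.card ≤ 𝒜.shatterer.card := Finset.card_le_card_shatterer 𝒜
    _ ≤ ∑ k ∈ Finset.range z, (Y.powersetCard k).card :=
      (Finset.card_le_card hshatterer).trans Finset.card_biUnion_le
    _ = ∑ i ∈ Finset.range z, Y.card.choose i := by simp only [Finset.card_powersetCard]

theorem Finset.Shatters.shattersSet {α : Type*} [DecidableEq α] {𝒞 : Set (Set α)} {Y : Set α}
    {𝒜 : Finset (Finset α)} {S : Finset α} (hS : 𝒜.Shatters S) (hSY : ↑S ⊆ Y)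
    (h𝒜 : ∀ u ∈ 𝒜, ∃ C ∈ 𝒞, C ∩ Y = u) : ShattersSet 𝒞 S := by
  classical
  intro B hB
  obtain ⟨u, hu, hSu⟩ := hS (Finset.filter_subset (· ∈ B) S)
  obtain ⟨C, hC, hCu⟩ := h𝒜 u hu
  have hC_iff : ∀ x ∈ S, x ∈ C ↔ x ∈ B := by
    intro x hx
    have hu_iff : x ∈ u ↔ x ∈ B := by simpa [hx] using congrArg (x ∈ ·) hSu
    rw [← hu_iff, ← Finset.mem_coe, ← hCu]
    simp [hSY hx]
  refine ⟨C, hC, Set.ext fun x => ⟨fun ⟨hxC, hxS⟩ => (hC_iff x hxS).1 hxC, fun hxB => ?_⟩⟩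
  exact ⟨(hC_iff x (hB hxB)).2 hxB, hB hxB⟩

theorem ncard_traces_le_sum_choose {α : Type*} (𝒞 : Set (Set α)) (Y : Finset α) (z : ℕ)
    (hz : ∀ S : Finset α, S ⊆ Y → ShattersSet 𝒞 S → S.card < z) :
    {s | ∃ C ∈ 𝒞, s = C ∩ Y}.ncard ≤ ∑ i ∈ Finset.range z, Y.card.choose i := by
  classical
  set 𝒜 := Y.powerset.filter fun u : Finset α => ∃ C ∈ 𝒞, C ∩ Y = u
  have htraces : {s | ∃ C ∈ 𝒞, s = C ∩ Y} = (↑) '' (𝒜 : Set (Finset α)) := by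
    ext s
    constructor
    · rintro ⟨C, hC, rfl⟩
      have hcoe : (Y.filter (· ∈ C) : Set α) = C ∩ Y := by
        ext x
        simp [and_comm]
      exact ⟨_, Finset.mem_filter.2
        ⟨Finset.mem_powerset.2 (Finset.filter_subset _ _), C, hC, hcoe.symm⟩, hcoe⟩
    · rintro ⟨u, hu, rfl⟩
      obtain ⟨C, hC, hCu⟩ := (Finset.mem_filter.1 hu).2
      exact ⟨C, hC, hCu.symm⟩
  have hshatters : ∀ S, 𝒜.Shatters S → S ⊆ Y ∧ ShattersSet 𝒞 S := by
    intro S hS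
    obtain ⟨u, hu, hSu⟩ := hS.exists_superset
    have hSY := hSu.trans (Finset.mem_powerset.1 (Finset.mem_filter.1 hu).1)
    exact ⟨hSY, hS.shattersSet (Finset.coe_subset.2 hSY) fun u hu => (Finset.mem_filter.1 hu).2⟩
  rw [htraces, Set.ncard_image_of_injective _ Finset.coe_injective, Set.ncard_coe_finset]
  exact Finset.card_le_sum_choose_of_shatters_card_lt
    (fun u hu => Finset.mem_powerset.1 (Finset.mem_filter.1 hu).1)
    (fun S hS => hz S (hshatters S hS).1 (hshatters S hS).2)

theorem containsComplete_of_zar_le {n m d : ℕ} {E : Finset (Fin n → Fin m)}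
    (hE : zar n m d ≤ E.card) : ContainsComplete n m E d := by
  have hne :
      {z : ℕ | ∀ E : Finset (Fin n → Fin m), z ≤ E.card → ContainsComplete n m E d}.Nonempty :=
    ⟨m ^ n + 1, fun E hE => absurd (E.card_le_univ.trans_lt (by simp)) hE.not_gt⟩
  exact Nat.sInf_mem hne E hE

section Boxes

variable {n : ℕ} {X : Fin n → Type*}

theorem boxSet_eq_coe_piFinset [∀ i, DecidableEq (X i)] (A : ∀ i, Finset (X i)) :
    boxSet A = Fintype.piFinset A := by
  ext f
  simp [boxSet]

theorem IsBox.card_piFinset [∀ i, DecidableEq (X i)] {A : ∀ i, Finset (X i)} {m : ℕ}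
    (hA : IsBox A m) : (Fintype.piFinset A).card = m ^ n := by
  simp [Fintype.card_piFinset, hA _]

theorem IsBox.exists_isBox_boxSet_subset {A : ∀ i, Finset (X i)} {m k : ℕ} (hA : IsBox A m)
    (S : Finset (∀ i, X i)) (hS : ↑S ⊆ boxSet A) (hz : zar n m k ≤ S.card) :
    ∃ A' : ∀ i, Finset (X i), IsBox A' k ∧ boxSet A' ⊆ S := by
  classical
  let e i : Fin m ≃ A i := ((A i).equivFinOfCardEq (hA i)).symm
  let φ i : Fin m ↪ X i := (e i).toEmbedding.trans (Function.Embedding.subtype _)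
  let E : Finset (Fin n → Fin m) := Finset.univ.filter fun g => (fun i => φ i (g i)) ∈ S
  have hSE : S ⊆ E.image fun g i => φ i (g i) := by
    intro x hx
    refine Finset.mem_image.2 ⟨fun i => (e i).symm ⟨x i, hS hx i⟩, ?_, ?_⟩ <;>
      simp [E, φ, hx]
  obtain ⟨B, hBcard, hBE⟩ := containsComplete_of_zar_le
    (hz.trans ((Finset.card_le_card hSE).trans Finset.card_image_le))
  refine ⟨fun i => (B i).map (φ i), fun i => by simp [hBcard], fun x hx => ?_⟩
  choose b hb hbx using fun i => Finset.mem_map.1 (hx i)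
  have := (Finset.mem_filter.1 (hBE b hb)).2
  rwa [funext hbx] at this

end Boxes

theorem stmt_5_general {n : ℕ} {X : Fin n → Type*}
    (𝒞 : Set (Set (∀ i, X i))) (d : ℕ)
    (hVC : ∀ A : ∀ i, Finset (X i), IsBox A (d + 1) → ¬ ShattersBox 𝒞 A) :
    ∀ m : ℕ, d ≤ m → ∀ A : ∀ i, Finset (X i), IsBox A m →
      (traces 𝒞 A).ncard ≤ ∑ i ∈ Finset.range (zar n m (d + 1)), (m ^ n).choose i := by
  classical
  intro m _ A hA
  have key := ncard_traces_le_sum_choose 𝒞 (Fintype.piFinset A) (zar n m (d + 1))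
    fun S hSA hS => by
      by_contra! hz
      obtain ⟨A', hA', hA'S⟩ := hA.exists_isBox_boxSet_subset S
        (boxSet_eq_coe_piFinset A ▸ Finset.coe_subset.2 hSA) hz
      exact hVC A' hA' (hS.mono hA'S)
  rwa [hA.card_piFinset, ← boxSet_eq_coe_piFinset] at key

/-- Generalized Sauer–Shelah lemma: if `𝒞 ⊆ P(X_0 × ⋯ × X_{n-1})` has `VC_n(𝒞) ≤ d`
(no box of size `d + 1` is shattered), then for every `m ≥ d` the number of traces of `𝒞`
on any box of size `m` is at most `∑_{i < z} (m^n choose i)` with `z = z_n(m, d + 1)`. -/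
theorem stmt_5 {n : ℕ} {X : Fin n → Type*} [∀ i, Infinite (X i)]
    (𝒞 : Set (Set (∀ i, X i))) (d : ℕ)
    (hVC : ∀ A : ∀ i, Finset (X i), IsBox A (d + 1) → ¬ ShattersBox 𝒞 A) :
    ∀ m : ℕ, d ≤ m → ∀ A : ∀ i, Finset (X i), IsBox A m →
      (traces 𝒞 A).ncard ≤ ∑ i ∈ Finset.range (zar n m (d + 1)), (m ^ n).choose i :=
  stmt_5_general 𝒞 d hVC
end

section
/- Suppose a family C of subsets of a product X_0 × ⋯ × X_{n-1}, viewed as traces on a fixed box A = A_0 × ⋯ × A_{n-1} of size m, is downward closed and shatters no box of size d+1. Then every member B of C, viewed as the edge set of an n-partite n-uniform hypergraph on A_0 ⊔ ⋯ ⊔ A_{n-1}, contains no complete n-partite subhypergraph with all parts of size d+1; consequently |B| < z_n(m, d+1). -/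
/-- Let `A` be a fixed box of size `m` and `𝒞` a family of subsets of the box `A`
(traces on `A`) which is downward closed and shatters no box of size `d + 1`. Then every
member `B` of `𝒞`, viewed as the edge set of an `n`-partite `n`-uniform hypergraph on
`A_0 ⊔ ⋯ ⊔ A_{n-1}`, contains no complete `n`-partite subhypergraph with all parts of size
`d + 1`; consequently `|B| < z_n(m, d + 1)`. -/
theorem stmt_6 {n : ℕ} {X : Fin n → Type*} (m d : ℕ)
    (A : ∀ i, Finset (X i)) (hA : IsBox A m)
    (𝒞 : Set (Set (∀ i, X i)))
    (htr : ∀ C ∈ 𝒞, C ⊆ boxSet A)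
    (hdc : ∀ s t : Set (∀ i, X i), s ⊆ t → t ∈ 𝒞 → s ∈ 𝒞)
    (hVC : ∀ A' : ∀ i, Finset (X i), IsBox A' (d + 1) → ¬ ShattersBox 𝒞 A') :
    ∀ B ∈ 𝒞,
      (¬ ∃ B' : ∀ i, Finset (X i), (∀ i, B' i ⊆ A i) ∧ IsBox B' (d + 1) ∧ boxSet B' ⊆ B) ∧
      B.ncard < zar n m (d + 1) := by
  classical
  intro B hB
  have hBA : B ⊆ boxSet A := htr B hB
  -- Part 1: no box of size d+1 inside B
  have part1 : ¬ ∃ B' : ∀ i, Finset (X i),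
      (∀ i, B' i ⊆ A i) ∧ IsBox B' (d + 1) ∧ boxSet B' ⊆ B := by
    rintro ⟨B', _, hbox, hss⟩
    apply hVC B' hbox
    intro S hS
    exact ⟨S, hdc S B (hS.trans hss) hB, Set.inter_eq_left.mpr hS⟩
  refine ⟨part1, ?_⟩
  -- Build the equivalences A i ≃ Fin m
  let e : ∀ i, {x // x ∈ A i} ≃ Fin m := fun i => (A i).equivFin.trans (finCongr (hA i))
  let Ψ : (Fin n → Fin m) → (∀ i, X i) := fun g i => ((e i).symm (g i) : X i)
  have hΨinj : Function.Injective Ψ := by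
    intro g h hgh
    funext i
    have := congrFun hgh i
    have : (e i).symm (g i) = (e i).symm (h i) := Subtype.ext this
    exact (e i).symm.injective this
  let E : Finset (Fin n → Fin m) := Finset.univ.filter (fun g => Ψ g ∈ B)
  have hBE : B = Ψ '' ↑E := by
    ext b
    constructor
    · intro hb
      refine ⟨fun i => e i ⟨b i, hBA hb i⟩, ?_, ?_⟩
      · have : Ψ (fun i => e i ⟨b i, hBA hb i⟩) = b := by
          funext i; simp [Ψ]
        simpa [E, this] using hb
      · funext i; simp [Ψ]
    · rintro ⟨g, hg, rfl⟩
      simpa [E] using hg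
  have hcard : B.ncard = E.card := by
    rw [hBE, Set.ncard_image_of_injective _ hΨinj, Set.ncard_coe_finset]
  -- E contains no complete subhypergraph of size d+1
  have hnc : ¬ ContainsComplete n m E (d + 1) := by
    rintro ⟨Bf, hBfcard, hall⟩
    apply part1
    refine ⟨fun i => (Bf i).image (fun k => ((e i).symm k : X i)), ?_, ?_, ?_⟩
    · intro i x hx
      simp only [Finset.mem_image] at hx
      obtain ⟨k, _, rfl⟩ := hx
      exact ((e i).symm k).2
    · intro i
      rw [Finset.card_image_of_injective _ (fun a b hab =>
        (e i).symm.injective (Subtype.ext hab))]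
      exact hBfcard i
    · intro f hf
      have : ∀ i, ∃ k, k ∈ Bf i ∧ ((e i).symm k : X i) = f i := by
        intro i
        have := hf i
        simp only [Finset.mem_image] at this
        obtain ⟨k, hk, hke⟩ := this
        exact ⟨k, hk, hke⟩
      choose k hk1 hk2 using this
      have hkE : k ∈ E := hall k hk1
      have : Ψ k = f := funext hk2
      have := (Finset.mem_filter.mp hkE).2
      rwa [‹Ψ k = f›] at this
  -- conclude
  by_contra hlt
  push_neg at hlt
  have hne : {z : ℕ | ∀ E : Finset (Fin n → Fin m),
      z ≤ E.card → ContainsComplete n m E (d + 1)}.Nonempty := by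
    refine ⟨m ^ n + 1, fun E' hE' => absurd hE' ?_⟩
    push_neg
    calc E'.card ≤ Fintype.card (Fin n → Fin m) := Finset.card_le_univ E'
    _ = m ^ n := by simp
    _ < m ^ n + 1 := Nat.lt_succ_self _
  have hmem := Nat.sInf_mem hne
  have := hmem E (by rw [← hcard]; exact hlt)
  exact hnc this
end

section
/- For every n and d ≥ 1, there exists a family C of subsets of ω^n such that VC_n(C) = d and π_{C,n}(m) ≥ 2^{z_n(m,d+1) − 1} for every m ≥ d. -/
/-!
The family of all subsets of `ℕ^n` that contain no box of size `d + 1` works. It cannot shatter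
a box of size `d + 1`, since the whole box would have to be one of its members, but every subset
of the box `[0, d)^n` belongs to it. For each `m`, embed an extremal hypergraph `E ⊆ [m]^n` with
`z_n(m, d+1) - 1` edges and no complete part of size `d + 1` into the box `[0, m)^n`: a box of
size `d + 1` inside a subset of the image of `E` pulls back to a complete subhypergraph of `E`,
so all `2 ^ |E|` subsets of that image belong to the family and are distinct traces.
-/

open Set

section Boxes

variable {n : ℕ} {X : Fin n → Type*}

def ContainsBox (C : Set (∀ i, X i)) (k : ℕ) : Prop :=
  ∃ A : ∀ i, Finset (X i), IsBox A k ∧ boxSet A ⊆ C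

theorem ContainsBox.mono {C D : Set (∀ i, X i)} {k : ℕ} (h : ContainsBox C k) (hCD : C ⊆ D) :
    ContainsBox D k :=
  let ⟨A, hA, hAC⟩ := h
  ⟨A, hA, hAC.trans hCD⟩

theorem boxSet_eq_pi (A : ∀ i, Finset (X i)) :
    boxSet A = univ.pi fun i => (A i : Set (X i)) := by
  ext f
  simp [boxSet]

theorem boxSet_finite (A : ∀ i, Finset (X i)) : (boxSet A).Finite := by
  rw [boxSet_eq_pi]
  exact Finite.pi fun i => (A i).finite_toSet

theorem IsBox.nonempty {A : ∀ i, Finset (X i)} {k : ℕ} (hA : IsBox A k) (hk : 0 < k)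
    (i : Fin n) :
    (A i).Nonempty :=
  Finset.card_pos.mp (hA i ▸ hk)

theorem coe_subset_of_boxSet_subset_pi {A : ∀ i, Finset (X i)} {t : ∀ i, Set (X i)}
    (hA : ∀ i, (A i).Nonempty) (h : boxSet A ⊆ univ.pi t) (i : Fin n) : ↑(A i) ⊆ t i := by
  rw [boxSet_eq_pi, pi_subset_pi_iff] at h
  rcases h with h | h
  · exact h i (mem_univ i)
  · exact absurd h (univ_pi_nonempty_iff.mpr fun i => Finset.coe_nonempty.mpr (hA i)).ne_empty

theorem not_containsBox_boxSet {B : ∀ i, Finset (X i)} {k : ℕ} (i : Fin n)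
    (hi : (B i).card < k) :
    ¬ ContainsBox (boxSet B) k := by
  rintro ⟨A, hA, hAB⟩
  have hAi : A i ⊆ B i := Finset.coe_subset.mp <|
    coe_subset_of_boxSet_subset_pi (hA.nonempty (by omega)) (hAB.trans (boxSet_eq_pi B).subset) i
  have := Finset.card_le_card hAi
  rw [hA i] at this
  omega

theorem ShattersBox.exists_boxSet_subset {𝒞 : Set (Set (∀ i, X i))} {A : ∀ i, Finset (X i)}
    (h : ShattersBox 𝒞 A) : ∃ C ∈ 𝒞, boxSet A ⊆ C :=
  let ⟨C, hC, hCA⟩ := h (boxSet A) subset_rfl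
  ⟨C, hC, inter_eq_right.mp hCA⟩

theorem two_pow_card_le_ncard_traces {𝒞 : Set (Set (∀ i, X i))} {A : ∀ i, Finset (X i)}
    (S : Finset (∀ i, X i)) (hS : ↑S ⊆ boxSet A)
    (h𝒞 : ∀ T ⊆ S, (T : Set (∀ i, X i)) ∈ 𝒞) :
    2 ^ S.card ≤ (traces 𝒞 A).ncard := by
  let subsetsOfS := (fun T : Finset (∀ i, X i) => (T : Set (∀ i, X i))) '' S.powerset
  have hsub : subsetsOfS ⊆ traces 𝒞 A := by
    rintro _ ⟨T, hT, rfl⟩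
    have hTS : T ⊆ S := Finset.mem_powerset.mp hT
    exact ⟨T, h𝒞 T hTS, (inter_eq_left.mpr ((Finset.coe_subset.mpr hTS).trans hS)).symm⟩
  have hfin : (traces 𝒞 A).Finite :=
    (boxSet_finite A).finite_subsets.subset fun _ ⟨_, _, hs⟩ => hs ▸ inter_subset_right
  calc 2 ^ S.card = subsetsOfS.ncard := by
        rw [ncard_image_of_injective _ Finset.coe_injective, ncard_coe_finset,
          Finset.card_powerset]
    _ ≤ (traces 𝒞 A).ncard := ncard_le_ncard hsub hfin

end Boxes

theorem exists_not_containsComplete (n m : ℕ) {d : ℕ} (hd : 0 < d) :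
    ∃ E : Finset (Fin n → Fin m), zar n m d - 1 ≤ E.card ∧ ¬ ContainsComplete n m E d := by
  classical
  set Z := {z : ℕ | ∀ E : Finset (Fin n → Fin m), z ≤ E.card → ContainsComplete n m E d}
  have hZ : (m ^ n + 1) ∈ Z := fun E hE => by
    have := E.card_le_univ
    simp only [Fintype.card_fun, Fintype.card_fin] at this
    omega
  have hZ0 : 0 ∉ Z := fun h => by
    obtain ⟨B, hB, hall⟩ := h ∅ le_rfl
    have hne : ∀ i, (B i).Nonempty := fun i => Finset.card_pos.mp (hB i ▸ hd)
    simpa using hall (fun i => (hne i).choose) fun i => (hne i).choose_spec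
  -- `Z` is nonempty (no `E` has more than `m ^ n` edges) and misses `0`, so `sInf Z - 1 < sInf Z`.
  have hpos : 0 < sInf Z := Nat.pos_of_ne_zero fun h => hZ0 (h ▸ Nat.sInf_mem ⟨_, hZ⟩)
  have hzar : zar n m d = sInf Z := rfl
  have : zar n m d - 1 ∉ Z := Nat.notMem_of_lt_sInf (by omega)
  simpa [Z] using this

theorem containsComplete_of_containsBox_image {n m : ℕ} {α : Type*} {φ : Fin m → α}
    (hφ : Function.Injective φ) {E : Finset (Fin n → Fin m)} {k : ℕ} (hk : 0 < k)
    (h : ContainsBox ((φ ∘ ·) '' (E : Set (Fin n → Fin m))) k) :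
    ContainsComplete n m E k := by
  classical
  obtain ⟨A, hA, hAE⟩ := h
  have hrange : ∀ i, ↑(A i) ⊆ range φ := by
    refine coe_subset_of_boxSet_subset_pi (hA.nonempty hk) (hAE.trans ?_)
    rintro _ ⟨f, -, rfl⟩ i -
    exact mem_range_self (f i)
  refine ⟨fun i => (A i).preimage φ hφ.injOn, fun i => ?_, fun f hf => ?_⟩
  · rw [Finset.card_preimage, Finset.filter_true_of_mem fun a ha => hrange i ha, hA i]
  · obtain ⟨g, hg, hgf⟩ := hAE fun i => Finset.mem_preimage.mp (hf i)
    rwa [← hφ.comp_left hgf]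

theorem two_pow_card_le_ncard_traces_of_not_containsComplete {n m k : ℕ} (hk : 0 < k)
    {E : Finset (Fin n → Fin m)} (hE : ¬ ContainsComplete n m E k) :
    2 ^ E.card ≤
      (traces {C : Set (Fin n → ℕ) | ¬ ContainsBox C k} fun _ => Finset.range m).ncard := by
  classical
  let S : Finset (Fin n → ℕ) := E.image (Fin.val ∘ ·)
  have hS : (S : Set (Fin n → ℕ)) ⊆ boxSet fun _ => Finset.range m := by
    intro x hx i
    obtain ⟨f, -, rfl⟩ := Finset.mem_image.mp hx
    exact Finset.mem_range.mpr (f i).isLt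
  rw [← Finset.card_image_of_injective E Fin.val_injective.comp_left]
  refine two_pow_card_le_ncard_traces S hS fun T hT hTbox => hE ?_
  exact containsComplete_of_containsBox_image Fin.val_injective hk <|
    hTbox.mono (by simpa [S] using Finset.coe_subset.mpr hT)

theorem stmt_7_general (n d : ℕ) (hn : 0 < n) :
    ∃ 𝒞 : Set (Set (Fin n → ℕ)),
      (∃ A : Fin n → Finset ℕ, IsBox A d ∧ ShattersBox 𝒞 A) ∧
      (∀ A : Fin n → Finset ℕ, IsBox A (d + 1) → ¬ ShattersBox 𝒞 A) ∧
      (∀ m : ℕ, d ≤ m → ∃ A : Fin n → Finset ℕ, IsBox A m ∧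
        2 ^ (zar n m (d + 1) - 1) ≤ (traces 𝒞 A).ncard) := by
  refine ⟨{C | ¬ ContainsBox C (d + 1)}, ?_, ?_, ?_⟩
  · refine ⟨fun _ => Finset.range d, fun _ => Finset.card_range d, fun B hB => ?_⟩
    exact ⟨B, fun hBd => not_containsBox_boxSet ⟨0, hn⟩ (by simp) (hBd.mono hB),
      inter_eq_left.mpr hB⟩
  · intro A hA hsh
    obtain ⟨C, hC, hAC⟩ := hsh.exists_boxSet_subset
    exact hC ⟨A, hA, hAC⟩
  · intro m _
    obtain ⟨E, hEcard, hE⟩ := exists_not_containsComplete n m (Nat.succ_pos d)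
    refine ⟨fun _ => Finset.range m, fun _ => Finset.card_range m, ?_⟩
    calc 2 ^ (zar n m (d + 1) - 1) ≤ 2 ^ E.card := Nat.pow_le_pow_right two_pos hEcard
      _ ≤ _ := two_pow_card_le_ncard_traces_of_not_containsComplete (Nat.succ_pos d) hE

/-- For every `n ≥ 1` and `d ≥ 1` there is a family `𝒞` of subsets of `ω^n` with
`VC_n(𝒞) = d` (some box of size `d` is shattered, no box of size `d + 1` is) such that
`π_{𝒞,n}(m) ≥ 2 ^ (z_n(m, d+1) - 1)` for every `m ≥ d` (witnessed by some box of size `m`). -/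
theorem stmt_7 (n d : ℕ) (hn : 0 < n) (hd : 1 ≤ d) :
    ∃ 𝒞 : Set (Set (Fin n → ℕ)),
      (∃ A : Fin n → Finset ℕ, IsBox A d ∧ ShattersBox 𝒞 A) ∧
      (∀ A : Fin n → Finset ℕ, IsBox A (d + 1) → ¬ ShattersBox 𝒞 A) ∧
      (∀ m : ℕ, d ≤ m → ∃ A : Fin n → Finset ℕ, IsBox A m ∧
        2 ^ (zar n m (d + 1) - 1) ≤ (traces 𝒞 A).ncard) :=
  stmt_7_general n d hn
end

section
/- There exists a constant c > 0 and a family C of subsets of ω × ω with VC_2(C) = 1 such that π_{C,2}(m) ≥ 2^{c·m^{3/2}} for every m ≥ 1; in particular, there is no constant c' with π_{C,2}(m) ≤ 2^{c'·m·log₂ m} for all large m. -/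
/-- The subset of `ℕ × ℕ` determined by a box `A₀ × A₁`. -/
def boxSet2 (A₀ A₁ : Finset ℕ) : Set (ℕ × ℕ) := {p | p.1 ∈ A₀ ∧ p.2 ∈ A₁}

/-- The traces of a family `𝒞` of subsets of `ℕ × ℕ` on the box `A₀ × A₁`. -/
def traces2 (𝒞 : Set (Set (ℕ × ℕ))) (A₀ A₁ : Finset ℕ) : Set (Set (ℕ × ℕ)) :=
  {s | ∃ C ∈ 𝒞, s = C ∩ boxSet2 A₀ A₁}

/-- `𝒞` shatters the box `A₀ × A₁`. -/
def ShattersBox2 (𝒞 : Set (Set (ℕ × ℕ))) (A₀ A₁ : Finset ℕ) : Prop :=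
  ∀ B ⊆ boxSet2 A₀ A₁, ∃ C ∈ 𝒞, C ∩ boxSet2 A₀ A₁ = B

/-!
K₂,₂-free sets form a lower set, so they shatter a box exactly when the box itself is
K₂,₂-free, i.e. when one of its sides has at most one point; hence `VC₂ = 1`. Every subset of a
K₂,₂-free set `G` inside a box is a trace on it, so there are at least `2 ^ |G|` traces.
Point–line incidences over `𝔽_p` form a K₂,₂-free set of size `p³` in a box of side `p²`
(two points span one line), and by Bertrand's postulate `p` can be chosen with `p² ≤ m < 4p²`,
which gives `|G| ≥ m^(3/2) / 8`. Finally `m log m = o(m^(3/2))` rules out `2^(c' m log m)`.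
-/

open Filter Asymptotics Finset

section Traces

variable {𝒞 : Set (Set (ℕ × ℕ))} {A₀ A₁ : Finset ℕ}

lemma boxSet2_eq_coe_product (A₀ A₁ : Finset ℕ) : boxSet2 A₀ A₁ = ↑(A₀ ×ˢ A₁) := by
  ext; simp [boxSet2]

lemma traces2_finite (𝒞 : Set (Set (ℕ × ℕ))) (A₀ A₁ : Finset ℕ) :
    (traces2 𝒞 A₀ A₁).Finite := by
  refine ((boxSet2_eq_coe_product A₀ A₁ ▸ (A₀ ×ˢ A₁).finite_toSet).finite_subsets).subset ?_
  rintro s ⟨C, -, rfl⟩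
  exact Set.inter_subset_right

lemma shattersBox2_iff_boxSet2_mem (h𝒞 : IsLowerSet 𝒞) :
    ShattersBox2 𝒞 A₀ A₁ ↔ boxSet2 A₀ A₁ ∈ 𝒞 := by
  refine ⟨fun hsh => ?_, fun hbox B hB => ⟨B, h𝒞 hB hbox, Set.inter_eq_left.mpr hB⟩⟩
  obtain ⟨C, hC, hCbox⟩ := hsh _ subset_rfl
  exact h𝒞 (Set.inter_eq_right.mp hCbox) hC

lemma two_pow_card_le_ncard_traces2 (h𝒞 : IsLowerSet 𝒞) {G : Finset (ℕ × ℕ)}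
    (hG : (G : Set (ℕ × ℕ)) ∈ 𝒞) (hGbox : (G : Set (ℕ × ℕ)) ⊆ boxSet2 A₀ A₁) :
    2 ^ G.card ≤ (traces2 𝒞 A₀ A₁).ncard := by
  have hsub : (fun T : Finset (ℕ × ℕ) => (T : Set (ℕ × ℕ))) '' ↑G.powerset ⊆
      traces2 𝒞 A₀ A₁ := by
    rintro _ ⟨T, hT, rfl⟩
    have hTG : (T : Set (ℕ × ℕ)) ⊆ G := by simpa using hT
    exact ⟨T, h𝒞 hTG hG, (Set.inter_eq_left.mpr (hTG.trans hGbox)).symm⟩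
  calc 2 ^ G.card = ((fun T : Finset (ℕ × ℕ) => (T : Set (ℕ × ℕ))) '' ↑G.powerset).ncard := by
        rw [Set.ncard_image_of_injective _ Finset.coe_injective, Set.ncard_coe_finset,
          Finset.card_powerset]
    _ ≤ _ := Set.ncard_le_ncard hsub (traces2_finite 𝒞 A₀ A₁)

end Traces

def K22Free {α β : Type*} (S : Set (α × β)) : Prop :=
  ∀ ⦃a a' : α⦄ ⦃b b' : β⦄, a ≠ a' → b ≠ b' →
    (a, b) ∈ S → (a, b') ∈ S → (a', b) ∈ S → (a', b') ∈ S → False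

section K22Free

variable {α β γ δ : Type*}

lemma isLowerSet_setOf_k22Free : IsLowerSet {S : Set (α × β) | K22Free S} :=
  fun _ _ hST hS _ _ _ _ ha hb h₁ h₂ h₃ h₄ => hS ha hb (hST h₁) (hST h₂) (hST h₃) (hST h₄)

lemma K22Free.image_prodMap {S : Set (α × β)} (hS : K22Free S) {f : α → γ} {g : β → δ}
    (hf : f.Injective) (hg : g.Injective) : K22Free (Prod.map f g '' S) := by
  rintro _ _ _ _ ha hb ⟨⟨a, b⟩, h₁, h₁'⟩ ⟨⟨a₂, b'⟩, h₂, h₂'⟩ ⟨⟨a', b₃⟩, h₃, h₃'⟩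
    ⟨⟨a₄, b₄⟩, h₄, h₄'⟩
  simp only [Prod.map, Prod.mk.injEq] at h₁' h₂' h₃' h₄'
  obtain ⟨rfl, rfl⟩ := h₁'
  obtain ⟨e₂, rfl⟩ := h₂'
  obtain ⟨rfl, e₃⟩ := h₃'
  obtain ⟨e₄, e₄'⟩ := h₄'
  rw [hf e₂] at h₂
  rw [hg e₃] at h₃
  rw [hf e₄, hg e₄'] at h₄
  exact hS (fun h => ha (congrArg f h)) (fun h => hb (congrArg g h)) h₁ h₂ h₃ h₄

lemma k22Free_boxSet2_iff {A₀ A₁ : Finset ℕ} :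
    K22Free (boxSet2 A₀ A₁) ↔ A₀.card ≤ 1 ∨ A₁.card ≤ 1 := by
  refine ⟨fun h => ?_, ?_⟩
  · by_contra! hcard
    obtain ⟨a, ha, a', ha', haa'⟩ := Finset.one_lt_card.mp hcard.1
    obtain ⟨b, hb, b', hb', hbb'⟩ := Finset.one_lt_card.mp hcard.2
    exact h haa' hbb' ⟨ha, hb⟩ ⟨ha, hb'⟩ ⟨ha', hb⟩ ⟨ha', hb'⟩
  · rintro (h | h) _ _ _ _ ha hb h₁ h₂ h₃ -
    · exact ha (Finset.card_le_one.mp h _ h₁.1 _ h₃.1)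
    · exact hb (Finset.card_le_one.mp h _ h₁.2 _ h₂.2)

end K22Free

section Incidence

variable (F : Type*) [Field F] [Fintype F] [DecidableEq F]

/-- Incidences between points `(x, y)` and non-vertical lines `y = m x + b`, the line being
recorded as `(m, b)`. -/
def incidences : Finset ((F × F) × (F × F)) :=
  univ.filter fun q => q.1.2 = q.2.1 * q.1.1 + q.2.2

lemma card_incidences : (incidences F).card = Fintype.card F ^ 3 := by
  rw [show Fintype.card F ^ 3 = (univ : Finset (F × F × F)).card by
    simp [Fintype.card_prod]; ring]
  refine Finset.card_nbij' (fun q => (q.1.1, q.2)) (fun t => ((t.1, t.2.1 * t.1 + t.2.2), t.2))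
    (fun _ _ => mem_coe.mpr (mem_univ _)) (fun _ _ => by simp [incidences]) ?_ (fun _ _ => rfl)
  rintro ⟨⟨x, y⟩, L⟩ hq
  simp_all [incidences]

lemma k22Free_incidences : K22Free (incidences F : Set ((F × F) × (F × F))) := by
  rintro ⟨x, y⟩ ⟨x', y'⟩ ⟨m, b⟩ ⟨m', b'⟩ hP hL h₁ h₂ h₃ h₄
  simp only [incidences, coe_filter, mem_univ, true_and, Set.mem_ofPred_eq] at h₁ h₂ h₃ h₄
  have hprod : (m - m') * (x - x') = 0 := by linear_combination h₂ - h₁ + h₃ - h₄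
  rcases mul_eq_zero.mp hprod with hm | hx
  · have hm : m = m' := sub_eq_zero.mp hm
    subst hm
    exact hL (Prod.ext rfl (by linear_combination h₂ - h₁))
  · have hx : x = x' := sub_eq_zero.mp hx
    subst hx
    exact hP (Prod.ext rfl (by linear_combination h₁ - h₃))

lemma exists_k22Free_subset_boxSet2_range_card_eq_cube {m : ℕ} (hm : Fintype.card F ^ 2 ≤ m) :
    ∃ G : Finset (ℕ × ℕ), (G : Set (ℕ × ℕ)) ⊆ boxSet2 (range m) (range m) ∧
      K22Free (G : Set (ℕ × ℕ)) ∧ G.card = Fintype.card F ^ 3 := by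
  set e : F × F → ℕ := fun P => Fintype.equivFin (F × F) P
  have he : e.Injective := Fin.val_injective.comp (Fintype.equivFin (F × F)).injective
  have he_lt (P : F × F) : e P < m := by
    refine lt_of_lt_of_le ?_ hm
    simpa [sq, Fintype.card_prod] using (Fintype.equivFin (F × F) P).isLt
  refine ⟨(incidences F).image (Prod.map e e), ?_, ?_, ?_⟩
  · intro _ hq
    obtain ⟨q, -, rfl⟩ := mem_image.mp hq
    exact ⟨mem_range.mpr (he_lt _), mem_range.mpr (he_lt _)⟩
  · rw [coe_image]
    exact (k22Free_incidences F).image_prodMap he he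
  · rw [card_image_of_injective _ (he.prodMap he), card_incidences]

end Incidence

lemma exists_prime_sq_le_lt_four_mul_sq {m : ℕ} (hm : 4 ≤ m) :
    ∃ p, p.Prime ∧ p ^ 2 ≤ m ∧ m < 4 * p ^ 2 := by
  set k := Nat.sqrt m
  have hk : 2 ≤ k := Nat.le_sqrt.mpr hm
  obtain ⟨p, hp, hkp, hpk⟩ := Nat.exists_prime_lt_and_le_two_mul (k / 2) (by omega)
  refine ⟨p, hp, ?_, ?_⟩
  · calc p ^ 2 ≤ k ^ 2 := Nat.pow_le_pow_left (by omega) 2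
      _ ≤ m := Nat.sqrt_le' m
  · calc m < (k + 1) ^ 2 := Nat.lt_succ_sqrt' m
      _ ≤ (2 * p) ^ 2 := Nat.pow_le_pow_left (by omega) 2
      _ = 4 * p ^ 2 := by ring

lemma rpow_three_halves_le {x y : ℝ} (hx : 0 ≤ x) (hy : 0 ≤ y) (h : x ≤ 4 * y ^ 2) :
    x ^ (3 / 2 : ℝ) ≤ 8 * y ^ 3 :=
  calc x ^ (3 / 2 : ℝ) ≤ ((2 * y) ^ (2 : ℕ)) ^ (3 / 2 : ℝ) :=
        Real.rpow_le_rpow hx (by linarith) (by norm_num)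
    _ = 8 * y ^ 3 := by
        rw [← Real.rpow_natCast, ← Real.rpow_mul (by positivity)]
        norm_num
        ring

lemma exists_k22Free_subset_boxSet2_range_card_ge {m : ℕ} (hm : 1 ≤ m) :
    ∃ G : Finset (ℕ × ℕ), (G : Set (ℕ × ℕ)) ⊆ boxSet2 (range m) (range m) ∧
      K22Free (G : Set (ℕ × ℕ)) ∧ 1 / 8 * (m : ℝ) ^ (3 / 2 : ℝ) ≤ G.card := by
  obtain ⟨s, G, hGbox, hG, hcard, hms⟩ : ∃ (s : ℕ) (G : Finset (ℕ × ℕ)),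
      (G : Set (ℕ × ℕ)) ⊆ boxSet2 (range m) (range m) ∧ K22Free (G : Set (ℕ × ℕ)) ∧
        G.card = s ^ 3 ∧ m ≤ 4 * s ^ 2 := by
    rcases lt_or_ge m 4 with hm4 | hm4
    · refine ⟨1, {(0, 0)}, ?_, ?_, rfl, by omega⟩
      · simp only [coe_singleton, Set.singleton_subset_iff]
        exact ⟨mem_range.mpr hm, mem_range.mpr hm⟩
      · intro _ _ _ _ ha _ h₁ _ h₃ _
        simp only [coe_singleton, Set.mem_singleton_iff, Prod.mk.injEq] at h₁ h₃
        exact ha (h₁.1.trans h₃.1.symm)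
    · obtain ⟨p, hp, hpm, hmp⟩ := exists_prime_sq_le_lt_four_mul_sq hm4
      have := Fact.mk hp
      obtain ⟨G, hGbox, hG, hcard⟩ :=
        exists_k22Free_subset_boxSet2_range_card_eq_cube (ZMod p) (m := m) (by rwa [ZMod.card])
      exact ⟨p, G, hGbox, hG, by rwa [ZMod.card] at hcard, hmp.le⟩
  refine ⟨G, hGbox, hG, ?_⟩
  have := rpow_three_halves_le m.cast_nonneg s.cast_nonneg (by exact_mod_cast hms)
  rw [hcard]
  push_cast
  linarith

lemma exists_two_rpow_le_ncard_traces2 {m : ℕ} (hm : 1 ≤ m) :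
    ∃ A₀ A₁ : Finset ℕ, A₀.card = m ∧ A₁.card = m ∧
      (2 : ℝ) ^ (1 / 8 * (m : ℝ) ^ (3 / 2 : ℝ)) ≤ (traces2 {S | K22Free S} A₀ A₁).ncard := by
  obtain ⟨G, hGbox, hG, hcard⟩ := exists_k22Free_subset_boxSet2_range_card_ge hm
  refine ⟨range m, range m, card_range m, card_range m, ?_⟩
  calc (2 : ℝ) ^ (1 / 8 * (m : ℝ) ^ (3 / 2 : ℝ)) ≤ (2 : ℝ) ^ (G.card : ℝ) :=
        Real.rpow_le_rpow_of_exponent_le one_le_two hcard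
    _ = ((2 ^ G.card : ℕ) : ℝ) := by rw [Real.rpow_natCast]; push_cast; rfl
    _ ≤ _ := by exact_mod_cast two_pow_card_le_ncard_traces2 isLowerSet_setOf_k22Free hG hGbox

lemma eventually_mul_logb_lt_mul_rpow {c : ℝ} (hc : 0 < c) (c' : ℝ) :
    ∀ᶠ x : ℝ in atTop, c' * x * Real.logb 2 x < c * x ^ (3 / 2 : ℝ) := by
  have ho : (fun x => c' * x * Real.logb 2 x) =o[atTop] fun x => x ^ (3 / 2 : ℝ) := by
    have h : (fun x => x * Real.log x) =o[atTop] fun x => x * x ^ (1 / 2 : ℝ) :=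
      (isBigO_refl _ _).mul_isLittleO (isLittleO_log_rpow_atTop (by norm_num))
    refine (h.const_mul_left (c' / Real.log 2)).congr' ?_ ?_
    · exact Eventually.of_forall fun x => by simp only [← Real.log_div_log]; ring
    · filter_upwards [eventually_gt_atTop 0] with x hx
      rw [show (3 / 2 : ℝ) = 1 + 1 / 2 by norm_num, Real.rpow_add hx, Real.rpow_one]
  filter_upwards [ho.bound (half_pos hc), eventually_gt_atTop 0] with x hbound hx
  have hpos : 0 < x ^ (3 / 2 : ℝ) := by positivity
  rw [Real.norm_of_nonneg hpos.le] at hbound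
  linarith [Real.le_norm_self (c' * x * Real.logb 2 x), mul_lt_mul_of_pos_right (half_lt_self hc) hpos]

/-- There is a constant `c > 0` and a family `𝒞` of subsets of `ω × ω` with `VC₂(𝒞) = 1`
(some box of size `1` is shattered, no box of size `2` is) such that
`π_{𝒞,2}(m) ≥ 2^(c·m^(3/2))` for every `m ≥ 1`; in particular there is no constant `c'`
with `π_{𝒞,2}(m) ≤ 2^(c'·m·log₂ m)` for all large `m`. -/
theorem stmt_10 :
    ∃ c : ℝ, 0 < c ∧ ∃ 𝒞 : Set (Set (ℕ × ℕ)),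
      (∃ A₀ A₁ : Finset ℕ, A₀.card = 1 ∧ A₁.card = 1 ∧ ShattersBox2 𝒞 A₀ A₁) ∧
      (∀ A₀ A₁ : Finset ℕ, A₀.card = 2 → A₁.card = 2 → ¬ ShattersBox2 𝒞 A₀ A₁) ∧
      (∀ m : ℕ, 1 ≤ m → ∃ A₀ A₁ : Finset ℕ, A₀.card = m ∧ A₁.card = m ∧
        (2 : ℝ) ^ (c * (m : ℝ) ^ ((3 : ℝ) / 2)) ≤ ((traces2 𝒞 A₀ A₁).ncard : ℝ)) ∧
      ¬ ∃ c' : ℝ, ∃ M : ℕ, ∀ m : ℕ, M ≤ m → ∀ A₀ A₁ : Finset ℕ,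
          A₀.card = m → A₁.card = m →
          ((traces2 𝒞 A₀ A₁).ncard : ℝ) ≤ (2 : ℝ) ^ (c' * m * Real.logb 2 m) := by
  refine ⟨1 / 8, by norm_num, {S | K22Free S}, ⟨{0}, {0}, rfl, rfl, ?_⟩, fun A₀ A₁ h₀ h₁ => ?_,
    fun m hm => exists_two_rpow_le_ncard_traces2 hm, ?_⟩
  · rw [shattersBox2_iff_boxSet2_mem isLowerSet_setOf_k22Free]
    exact k22Free_boxSet2_iff.mpr (Or.inl le_rfl)
  · rw [shattersBox2_iff_boxSet2_mem isLowerSet_setOf_k22Free, Set.mem_ofPred_eq,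
      k22Free_boxSet2_iff, h₀, h₁]
    omega
  · rintro ⟨c', M, hupper⟩
    obtain ⟨m, hm, hmM⟩ := ((tendsto_natCast_atTop_atTop.eventually
      (eventually_mul_logb_lt_mul_rpow (by norm_num : (0 : ℝ) < 1 / 8) c')).and
        (eventually_ge_atTop (max M 1))).exists
    obtain ⟨A₀, A₁, h₀, h₁, hlower⟩ := exists_two_rpow_le_ncard_traces2 (m := m) (by omega)
    have h := (Real.rpow_le_rpow_left_iff one_lt_two).mp
      (hlower.trans (hupper m (by omega) A₀ A₁ h₀ h₁))
    linarith
end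

section
/- If K is a class of finite L-structures with the Ramsey property in which every structure has trivial automorphism group, and the hereditary closure K* = {A : A ⊆ B for some B ∈ K} has the amalgamation property, then K* also has the Ramsey property. -/
/-!
Write `A ⊆ A'` with `A' ∈ K`. By amalgamating once for each copy of `A` in `B`, enlarge `B`
inside `K*` to a structure in which every copy of `A` extends to a copy of `A'`, and embed that
structure into some `B' ∈ K`. Take `C ∈ K` with `C → (B')^{A'}_k` and colour each copy of `A'`
by the colour of its distinguished sub-copy of `A`; since `A'` is rigid this sub-copy is well
defined. A monochromatic copy of `B'` contains a copy of `B` all of whose copies of `A` are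
distinguished sub-copies of copies of `A'` inside it, hence of a single colour.
-/

open FirstOrder

/-- A bundled finite `L`-structure. -/
structure FinStr (L : Language) where
  carrier : Type
  [str : L.Structure carrier]
  [fin : Finite carrier]

attribute [instance] FinStr.str FinStr.fin

/-- The copies of `A` in `C`: substructures of `C` isomorphic to `A`. -/
def Copies {L : Language} (A C : FinStr L) : Type :=
  {S : L.Substructure C.carrier // Nonempty (A.carrier ≃[L] S)}

/-- `C → (B)^A_k`: every `k`-coloring of the copies of `A` in `C` is constant on the copies
of `A` lying inside some copy of `B` in `C`. -/
def ArrowsInto {L : Language} (A B C : FinStr L) (k : ℕ) : Prop :=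
  ∀ col : Copies A C → Fin k,
    ∃ S : L.Substructure C.carrier, Nonempty (B.carrier ≃[L] S) ∧
      ∀ T T' : Copies A C, T.1 ≤ S → T'.1 ≤ S → col T = col T'

/-- A class `K` of finite `L`-structures has the Ramsey property if for all `A, B ∈ K` and
all `k` there is `C ∈ K` with `C → (B)^A_k`. -/
def HasRamsey {L : Language} (K : Set (FinStr L)) : Prop :=
  ∀ A ∈ K, ∀ B ∈ K, ∀ k : ℕ, ∃ C ∈ K, ArrowsInto A B C k

/-- The hereditary closure `K* = {A : A ⊆ B for some B ∈ K}` (up to isomorphism). -/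
def HeredCl {L : Language} (K : Set (FinStr L)) : Set (FinStr L) :=
  {A | ∃ B ∈ K, ∃ S : L.Substructure B.carrier, Nonempty (A.carrier ≃[L] S)}

/-- A class `K` has the amalgamation property. -/
def HasAmalgamation {L : Language} (K : Set (FinStr L)) : Prop :=
  ∀ A ∈ K, ∀ B ∈ K, ∀ C ∈ K, ∀ (f : A.carrier ↪[L] B.carrier) (g : A.carrier ↪[L] C.carrier),
    ∃ D ∈ K, ∃ (h : B.carrier ↪[L] D.carrier) (l : C.carrier ↪[L] D.carrier),
      ∀ x : A.carrier, h (f x) = l (g x)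

open FirstOrder.Language

namespace FirstOrder.Language.Embedding

variable {L : Language} {M N P : Type*} [L.Structure M] [L.Structure N] [L.Structure P]

instance [Finite M] [Finite N] : Finite (M ↪[L] N) :=
  Finite.of_injective _ DFunLike.coe_injective

theorem exists_comp_eq_of_range_le (ν : N ↪[L] P) (φ : M ↪[L] P)
    (h : φ.toHom.range ≤ ν.toHom.range) : ∃ f : M ↪[L] N, ν.comp f = φ := by
  refine ⟨ν.equivRange.symm.toEmbedding.comp (codRestrict _ φ fun x => h ⟨x, rfl⟩), ?_⟩
  ext x
  simp only [comp_apply]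
  rw [← equivRange_apply, Equiv.coe_toEmbedding, Equiv.apply_symm_apply, codRestrict_apply]

end FirstOrder.Language.Embedding

variable {L : Language}

namespace Copies

variable {A C : FinStr L}

noncomputable def ofEmbedding (f : A.carrier ↪[L] C.carrier) : Copies A C :=
  ⟨f.toHom.range, ⟨f.equivRange⟩⟩

noncomputable def embedding (T : Copies A C) : A.carrier ↪[L] C.carrier :=
  T.1.subtype.comp (Classical.choice T.2).toEmbedding

theorem range_embedding (T : Copies A C) : T.embedding.toHom.range = T.1 := by
  ext x
  constructor
  · rintro ⟨y, rfl⟩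
    exact ((Classical.choice T.2) y).2
  · intro hx
    exact ⟨(Classical.choice T.2).symm ⟨x, hx⟩, by simp [embedding]⟩

theorem ofEmbedding_embedding (T : Copies A C) : ofEmbedding T.embedding = T :=
  Subtype.ext T.range_embedding

theorem embedding_ofEmbedding (hrigid : ∀ σ : A.carrier ≃[L] A.carrier, ∀ x, σ x = x)
    (f : A.carrier ↪[L] C.carrier) : (ofEmbedding f).embedding = f := by
  ext x
  set j : A.carrier ≃[L] f.toHom.range := Classical.choice (ofEmbedding f).2
  have hj : j x = f.equivRange x := by
    simpa using congrArg f.equivRange (hrigid (f.equivRange.symm.comp j) x)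
  change (j x : C.carrier) = f x
  rw [hj, Embedding.equivRange_apply]

end Copies

theorem subset_heredCl (K : Set (FinStr L)) : K ⊆ HeredCl K :=
  fun A hA => ⟨A, hA, ⊤, ⟨Substructure.topEquiv.symm⟩⟩

theorem exists_embedding_of_mem_heredCl {K : Set (FinStr L)} {A : FinStr L}
    (hA : A ∈ HeredCl K) : ∃ B ∈ K, Nonempty (A.carrier ↪[L] B.carrier) := by
  obtain ⟨B, hB, S, ⟨i⟩⟩ := hA
  exact ⟨B, hB, ⟨S.subtype.comp i.toEmbedding⟩⟩

namespace HasAmalgamation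

variable {K : Set (FinStr L)} {A A' B : FinStr L}

theorem exists_extension_of_list (hK : HasAmalgamation K) (hA : A ∈ K) (hA' : A' ∈ K)
    (hB : B ∈ K) (e : A.carrier ↪[L] A'.carrier) (l : List (A.carrier ↪[L] B.carrier)) :
    ∃ B₁ ∈ K, ∃ β : B.carrier ↪[L] B₁.carrier,
      ∀ f ∈ l, ∃ g : A'.carrier ↪[L] B₁.carrier, g.comp e = β.comp f := by
  induction l with
  | nil => exact ⟨B, hB, Embedding.refl L _, by simp⟩
  | cons f l ih =>
    obtain ⟨B₁, hB₁, β, hβ⟩ := ih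
    obtain ⟨D, hD, h, g, hcomm⟩ := hK A hA B₁ hB₁ A' hA' (β.comp f) e
    refine ⟨D, hD, h.comp β, List.forall_mem_cons.2 ⟨?_, fun f' hf' => ?_⟩⟩
    · exact ⟨g, Embedding.ext fun x => (hcomm x).symm⟩
    · obtain ⟨g', hg'⟩ := hβ f' hf'
      exact ⟨h.comp g', by rw [Embedding.comp_assoc, hg', Embedding.comp_assoc]⟩

theorem exists_extension (hK : HasAmalgamation K) (hA : A ∈ K) (hA' : A' ∈ K) (hB : B ∈ K)
    (e : A.carrier ↪[L] A'.carrier) :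
    ∃ B₁ ∈ K, ∃ β : B.carrier ↪[L] B₁.carrier,
      ∀ f : A.carrier ↪[L] B.carrier, ∃ g : A'.carrier ↪[L] B₁.carrier, g.comp e = β.comp f := by
  obtain ⟨l, -, hl⟩ := Finite.exists_univ_list (A.carrier ↪[L] B.carrier)
  obtain ⟨B₁, hB₁, β, hβ⟩ := hK.exists_extension_of_list hA hA' hB e l
  exact ⟨B₁, hB₁, β, fun f => hβ f (hl f)⟩

end HasAmalgamation

theorem ArrowsInto.of_extension {A A' B B' C : FinStr L} {k : ℕ}
    (hrigid : ∀ σ : A'.carrier ≃[L] A'.carrier, ∀ x, σ x = x)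
    (e : A.carrier ↪[L] A'.carrier) (β : B.carrier ↪[L] B'.carrier)
    (hext : ∀ f : A.carrier ↪[L] B.carrier, ∃ g : A'.carrier ↪[L] B'.carrier,
      g.comp e = β.comp f)
    (h : ArrowsInto A' B' C k) : ArrowsInto A B C k := by
  intro col
  obtain ⟨S, ⟨j⟩, hmono⟩ := h fun U => col (Copies.ofEmbedding (U.embedding.comp e))
  set ι : B'.carrier ↪[L] C.carrier := S.subtype.comp j.toEmbedding
  refine ⟨(ι.comp β).toHom.range, ⟨(ι.comp β).equivRange⟩, ?_⟩
  have hlift : ∀ T : Copies A C, T.1 ≤ (ι.comp β).toHom.range →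
      ∃ U : Copies A' C, U.1 ≤ S ∧ Copies.ofEmbedding (U.embedding.comp e) = T := by
    intro T hT
    obtain ⟨f, hf⟩ :=
      (ι.comp β).exists_comp_eq_of_range_le T.embedding (T.range_embedding ▸ hT)
    obtain ⟨g, hg⟩ := hext f
    refine ⟨Copies.ofEmbedding (ι.comp g), ?_, ?_⟩
    · rintro _ ⟨y, rfl⟩
      exact (j (g y)).2
    · rw [Copies.embedding_ofEmbedding hrigid, Embedding.comp_assoc, hg,
        ← Embedding.comp_assoc, hf, Copies.ofEmbedding_embedding]
  intro T T' hT hT'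
  obtain ⟨U, hU, rfl⟩ := hlift T hT
  obtain ⟨U', hU', rfl⟩ := hlift T' hT'
  exact hmono U U' hU hU'

/-- If `K` is a class of finite `L`-structures with the Ramsey property in which every
structure has trivial automorphism group, and its hereditary closure `K*` has the
amalgamation property, then `K*` also has the Ramsey property. -/
theorem stmt_15 {L : Language} (K : Set (FinStr L))
    (hK : HasRamsey K)
    (hrigid : ∀ A ∈ K, ∀ σ : A.carrier ≃[L] A.carrier, ∀ x : A.carrier, σ x = x)
    (hamalg : HasAmalgamation (HeredCl K)) :
    HasRamsey (HeredCl K) := by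
  intro A hA B hB k
  obtain ⟨A', hA'K, ⟨e⟩⟩ := exists_embedding_of_mem_heredCl hA
  obtain ⟨B₁, hB₁, β, hβ⟩ := hamalg.exists_extension hA (subset_heredCl K hA'K) hB e
  obtain ⟨B', hB'K, ⟨μ⟩⟩ := exists_embedding_of_mem_heredCl hB₁
  obtain ⟨C, hCK, hC⟩ := hK A' hA'K B' hB'K k
  refine ⟨C, subset_heredCl K hCK, hC.of_extension (hrigid A' hA'K) e (μ.comp β) fun f => ?_⟩
  obtain ⟨g, hg⟩ := hβ f
  exact ⟨μ.comp g, by rw [Embedding.comp_assoc, hg, Embedding.comp_assoc]⟩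
end

section
/- (Product Ramsey) If K_0 and K_1 are classes of finite L-structures each having the Ramsey property, then the class K_0 ⊕ K_1 = {A_0 ⊕ A_1 : A_0 ∈ K_0, A_1 ∈ K_1} of disjoint unions, with unary predicates P_0, P_1 marking the parts, also has the Ramsey property. -/
open FirstOrder

/-- Copies of the disjoint sum `A₀ ⊕ A₁` in `C₀ ⊕ C₁` (the parts being marked by the unary
predicates `P₀, P₁`, a copy is a pair of substructures, one of each part, isomorphic to the
respective `A_i`). -/
def PairCopies {L : Language} (A₀ A₁ C₀ C₁ : FinStr L) : Type :=
  {S : L.Substructure C₀.carrier × L.Substructure C₁.carrier //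
    Nonempty (A₀.carrier ≃[L] S.1) ∧ Nonempty (A₁.carrier ≃[L] S.2)}

/-- `C₀ ⊕ C₁ → (B₀ ⊕ B₁)^{A₀ ⊕ A₁}_k` for disjoint sums. -/
def PairArrowsInto {L : Language} (A₀ A₁ B₀ B₁ C₀ C₁ : FinStr L) (k : ℕ) : Prop :=
  ∀ col : PairCopies A₀ A₁ C₀ C₁ → Fin k,
    ∃ S : L.Substructure C₀.carrier × L.Substructure C₁.carrier,
      Nonempty (B₀.carrier ≃[L] S.1) ∧ Nonempty (B₁.carrier ≃[L] S.2) ∧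
      ∀ T T' : PairCopies A₀ A₁ C₀ C₁,
        T.1.1 ≤ S.1 → T.1.2 ≤ S.2 → T'.1.1 ≤ S.1 → T'.1.2 ≤ S.2 → col T = col T'

/-- Product Ramsey: if `K₀` and `K₁` are classes of finite `L`-structures with the Ramsey
property, then the class `K₀ ⊕ K₁ = {A₀ ⊕ A₁ : A₀ ∈ K₀, A₁ ∈ K₁}` of disjoint unions
(with unary predicates marking the parts, so that copies and embeddings of sums are pairs
of copies and embeddings of the parts) also has the Ramsey property. -/
theorem stmt_16 {L : Language} (K₀ K₁ : Set (FinStr L))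
    (h₀ : HasRamsey K₀) (h₁ : HasRamsey K₁) :
    ∀ A₀ ∈ K₀, ∀ A₁ ∈ K₁, ∀ B₀ ∈ K₀, ∀ B₁ ∈ K₁, ∀ k : ℕ,
      ∃ C₀ ∈ K₀, ∃ C₁ ∈ K₁, PairArrowsInto A₀ A₁ B₀ B₁ C₀ C₁ k := by
  intro A₀ hA₀ A₁ hA₁ B₀ hB₀ B₁ hB₁ k
  obtain ⟨C₁, hC₁K, HC₁⟩ := h₁ A₁ hA₁ B₁ hB₁ (k + 1)
  have hfinSub : Finite (L.Substructure C₁.carrier) :=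
    Finite.of_injective _ (SetLike.coe_injective (A := L.Substructure C₁.carrier))
  have hfinCop : Finite (Copies A₁ C₁) := by
    unfold Copies; exact Subtype.finite
  obtain ⟨m, ⟨e⟩⟩ := Finite.exists_equiv_fin (Copies A₁ C₁ → Fin k)
  obtain ⟨C₀, hC₀K, HC₀⟩ := h₀ A₀ hA₀ B₀ hB₀ m
  refine ⟨C₀, hC₀K, C₁, hC₁K, ?_⟩
  intro col
  -- pair a copy of A₀ and a copy of A₁ into a pair copy
  let mk : Copies A₀ C₀ → Copies A₁ C₁ → PairCopies A₀ A₁ C₀ C₁ :=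
    fun T₀ T₁ => ⟨(T₀.1, T₁.1), T₀.2, T₁.2⟩
  let col' : Copies A₀ C₀ → Copies A₁ C₁ → Fin k := fun T₀ T₁ => col (mk T₀ T₁)
  obtain ⟨S₀, hS₀iso, hom₀⟩ := HC₀ (fun T₀ => e (col' T₀))
  have hom₀' : ∀ T T' : Copies A₀ C₀, T.1 ≤ S₀ → T'.1 ≤ S₀ → col' T = col' T' :=
    fun T T' h h' => e.injective (hom₀ T T' h h')
  by_cases hex : ∃ T₀ : Copies A₀ C₀, T₀.1 ≤ S₀
  · -- second coloring
    obtain ⟨T₀₀, hT₀₀⟩ := hex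
    obtain ⟨S₁, hS₁iso, hom₁⟩ :=
      HC₁ (fun T₁ => Fin.castSucc (col' T₀₀ T₁))
    refine ⟨(S₀, S₁), hS₀iso, hS₁iso, ?_⟩
    intro T T' hT1 hT2 hT'1 hT'2
    have hTmk : T = mk ⟨T.1.1, T.2.1⟩ ⟨T.1.2, T.2.2⟩ := by
      apply Subtype.ext; rfl
    have hT'mk : T' = mk ⟨T'.1.1, T'.2.1⟩ ⟨T'.1.2, T'.2.2⟩ := by
      apply Subtype.ext; rfl
    have e1 : col T = col' T₀₀ ⟨T.1.2, T.2.2⟩ := by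
      rw [hTmk]
      show col' ⟨T.1.1, T.2.1⟩ ⟨T.1.2, T.2.2⟩ = _
      rw [hom₀' ⟨T.1.1, T.2.1⟩ T₀₀ hT1 hT₀₀]
    have e2 : col T' = col' T₀₀ ⟨T'.1.2, T'.2.2⟩ := by
      rw [hT'mk]
      show col' ⟨T'.1.1, T'.2.1⟩ ⟨T'.1.2, T'.2.2⟩ = _
      rw [hom₀' ⟨T'.1.1, T'.2.1⟩ T₀₀ hT'1 hT₀₀]
    rw [e1, e2]
    exact Fin.castSucc_injective _
      (hom₁ ⟨T.1.2, T.2.2⟩ ⟨T'.1.2, T'.2.2⟩ hT2 hT'2)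
  · -- no copy of A₀ in S₀: homogeneity is vacuous; get any copy of B₁
    obtain ⟨S₁, hS₁iso, _⟩ := HC₁ (fun _ => 0)
    refine ⟨(S₀, S₁), hS₀iso, hS₁iso, ?_⟩
    intro T T' hT1 _ _ _
    exact absurd ⟨⟨T.1.1, T.2.1⟩, hT1⟩ hex
end

section
/- Assuming the Nešetřil–Rödl theorem that the class of finite ordered n-uniform hypergraphs is Ramsey, the class of finite ordered 2-partite 2-uniform hypergraphs (ordered bipartite graphs with P_0 < P_1 and edges only between parts) has the Ramsey property. -/
/-- A finite ordered graph (ordered 2-uniform hypergraph): finite strict total order with a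
symmetric irreflexive adjacency relation. -/
structure OrdGraph where
  carrier : Type
  [fin : Fintype carrier]
  lt : carrier → carrier → Prop
  strict : IsStrictTotalOrder carrier lt
  adj : carrier → carrier → Prop
  adj_symm : ∀ x y : carrier, adj x y → adj y x
  adj_irrefl : ∀ x : carrier, ¬ adj x x

attribute [instance] OrdGraph.fin

/-- An embedding of ordered graphs. -/
structure OGEmb (A B : OrdGraph) where
  toFun : A.carrier → B.carrier
  inj : Function.Injective toFun
  map_lt : ∀ x y : A.carrier, A.lt x y ↔ B.lt (toFun x) (toFun y)
  map_adj : ∀ x y : A.carrier, A.adj x y ↔ B.adj (toFun x) (toFun y)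

/-- Composition of ordered-graph embeddings. -/
def OGEmb.comp {A B C : OrdGraph} (g : OGEmb B C) (f : OGEmb A B) : OGEmb A C where
  toFun := g.toFun ∘ f.toFun
  inj := g.inj.comp f.inj
  map_lt := fun x y => (f.map_lt x y).trans (g.map_lt _ _)
  map_adj := fun x y => (f.map_adj x y).trans (g.map_adj _ _)

/-- A finite ordered bipartite graph: parts `P_0 < P_1` (given by `part : carrier → Fin 2`),
a strict total order with `P_0` before `P_1`, and a symmetric irreflexive adjacency with
edges only between the parts. -/
structure OrdBipGraph where
  carrier : Type
  [fin : Fintype carrier]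
  lt : carrier → carrier → Prop
  strict : IsStrictTotalOrder carrier lt
  part : carrier → Fin 2
  parts_ordered : ∀ x y : carrier, part x < part y → lt x y
  adj : carrier → carrier → Prop
  adj_symm : ∀ x y : carrier, adj x y → adj y x
  adj_irrefl : ∀ x : carrier, ¬ adj x x
  adj_cross : ∀ x y : carrier, adj x y → part x ≠ part y

attribute [instance] OrdBipGraph.fin

/-- An embedding of ordered bipartite graphs. -/
structure OBEmb (A B : OrdBipGraph) where
  toFun : A.carrier → B.carrier
  inj : Function.Injective toFun
  map_lt : ∀ x y : A.carrier, A.lt x y ↔ B.lt (toFun x) (toFun y)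
  map_adj : ∀ x y : A.carrier, A.adj x y ↔ B.adj (toFun x) (toFun y)
  map_part : ∀ x : A.carrier, B.part (toFun x) = A.part x

/-- Composition of ordered-bipartite-graph embeddings. -/
def OBEmb.comp {A B C : OrdBipGraph} (g : OBEmb B C) (f : OBEmb A B) : OBEmb A C where
  toFun := g.toFun ∘ f.toFun
  inj := g.inj.comp f.inj
  map_lt := fun x y => (f.map_lt x y).trans (g.map_lt _ _)
  map_adj := fun x y => (f.map_adj x y).trans (g.map_adj _ _)
  map_part := fun x => (g.map_part _).trans (f.map_part x)

/-!
Apply the Nešetřil–Rödl theorem to the underlying ordered graphs of `A` and `B`, obtaining `C`,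
and use the bipartite double of `C`. An embedding `h` of the underlying ordered graph of `A`
into `C` lifts to the embedding `a ↦ (part a, h a)` of `A` into the double: since `P_0 < P_1`,
every edge of `A` runs from a smaller vertex in `P_0` to a larger one in `P_1`, which is exactly
how edges of the double are oriented. Lifting commutes with precomposition, so a colouring of
embeddings into the double pulls back to one of embeddings into `C`, and the lift of a
monochromatic copy of `B` in `C` is monochromatic.
-/

@[ext]
lemma OBEmb.ext {A B : OrdBipGraph} {f g : OBEmb A B} (h : f.toFun = g.toFun) : f = g := by
  cases f; cases g; cases h; rfl

namespace OrdBipGraph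

variable (A : OrdBipGraph)

abbrev toOrdGraph : OrdGraph := { A with }

lemma lt_iff_lex (x y : A.carrier) :
    A.lt x y ↔ A.part x < A.part y ∨ A.part x = A.part y ∧ A.lt x y := by
  have := A.strict
  refine ⟨fun hxy => ?_, ?_⟩
  · rcases lt_trichotomy (A.part x) (A.part y) with hp | hp | hp
    · exact Or.inl hp
    · exact Or.inr ⟨hp, hxy⟩
    · exact absurd hxy (asymm (A.parts_ordered _ _ hp))
  · rintro (hp | ⟨-, hxy⟩)
    · exact A.parts_ordered _ _ hp
    · exact hxy

lemma adj_iff_oriented (x y : A.carrier) :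
    A.adj x y ↔ (A.part x = 0 ∧ A.part y = 1 ∧ A.lt x y ∧ A.adj x y) ∨
      (A.part x = 1 ∧ A.part y = 0 ∧ A.lt y x ∧ A.adj y x) := by
  refine ⟨fun hxy => ?_, ?_⟩
  · have hcross := A.adj_cross _ _ hxy
    by_cases hx : A.part x = 0
    · have hy : A.part y = 1 := by omega
      exact Or.inl ⟨hx, hy, A.parts_ordered _ _ (by simp [hx, hy]), hxy⟩
    · have hx : A.part x = 1 := by omega
      have hy : A.part y = 0 := by omega
      exact Or.inr ⟨hx, hy, A.parts_ordered _ _ (by simp [hx, hy]), A.adj_symm _ _ hxy⟩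
  · rintro (⟨-, -, -, hxy⟩ | ⟨-, -, -, hyx⟩)
    · exact hxy
    · exact A.adj_symm _ _ hyx

end OrdBipGraph

def OBEmb.toOGEmb {A B : OrdBipGraph} (f : OBEmb A B) : OGEmb A.toOrdGraph B.toOrdGraph :=
  { f with }

/-- The paper's `w^0_i` and `w^1_j` are `(0, v_i)` and `(1, v_j)`. -/
def OrdGraph.bipartiteDouble (X : OrdGraph) : OrdBipGraph where
  carrier := Fin 2 × X.carrier
  lt := Prod.Lex (· < ·) X.lt
  strict := by
    have := X.strict
    exact {}
  part p := p.1
  parts_ordered _ _ h := Prod.Lex.left _ _ h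
  adj p q := (p.1 = 0 ∧ q.1 = 1 ∧ X.lt p.2 q.2 ∧ X.adj p.2 q.2) ∨
    (p.1 = 1 ∧ q.1 = 0 ∧ X.lt q.2 p.2 ∧ X.adj q.2 p.2)
  adj_symm := by
    rintro p q (⟨h0, h1, hl, ha⟩ | ⟨h0, h1, hl, ha⟩)
    · exact Or.inr ⟨h1, h0, hl, ha⟩
    · exact Or.inl ⟨h1, h0, hl, ha⟩
  adj_irrefl := by
    rintro p (⟨h0, h1, -, -⟩ | ⟨h0, h1, -, -⟩) <;> omega
  adj_cross := by
    rintro p q (⟨h0, h1, -, -⟩ | ⟨h0, h1, -, -⟩) <;> simp [h0, h1]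

namespace OGEmb

variable {A B : OrdBipGraph} {C : OrdGraph}

def liftBipartiteDouble (h : OGEmb A.toOrdGraph C) : OBEmb A C.bipartiteDouble where
  toFun a := (A.part a, h.toFun a)
  inj _ _ hxy := h.inj (congrArg Prod.snd hxy)
  map_lt x y := by
    have hlt : A.lt x y ↔ C.lt (h.toFun x) (h.toFun y) := h.map_lt x y
    show _ ↔ Prod.Lex (· < ·) C.lt (A.part x, h.toFun x) (A.part y, h.toFun y)
    rw [A.lt_iff_lex, hlt, Prod.lex_def]
  map_adj x y := by
    have hlt (x y : A.carrier) : A.lt x y ↔ C.lt (h.toFun x) (h.toFun y) := h.map_lt x y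
    have hadj (x y : A.carrier) : A.adj x y ↔ C.adj (h.toFun x) (h.toFun y) := h.map_adj x y
    rw [A.adj_iff_oriented, hlt, hlt, hadj, hadj]
    rfl
  map_part _ := rfl

lemma liftBipartiteDouble_comp (g : OGEmb B.toOrdGraph C) (f : OBEmb A B) :
    g.liftBipartiteDouble.comp f = (g.comp f.toOGEmb).liftBipartiteDouble := by
  ext a
  exact Prod.ext (f.map_part a) rfl

end OGEmb

/-- Assuming the Nešetřil–Rödl theorem that the class of finite ordered graphs (ordered
2-uniform hypergraphs) is a Ramsey class, the class of finite ordered bipartite graphs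
(2-partite 2-uniform hypergraphs with `P_0 < P_1` and edges only between the parts) has
the Ramsey property. (These structures are rigid, so colorings of copies are the same as
colorings of embeddings.) -/
theorem stmt_18
    (NR : ∀ A B : OrdGraph, ∀ k : ℕ, ∃ C : OrdGraph, ∀ col : OGEmb A C → Fin k,
      ∃ g : OGEmb B C, ∀ f f' : OGEmb A B, col (g.comp f) = col (g.comp f')) :
    ∀ A B : OrdBipGraph, ∀ k : ℕ, ∃ C : OrdBipGraph, ∀ col : OBEmb A C → Fin k,
      ∃ g : OBEmb B C, ∀ f f' : OBEmb A B, col (g.comp f) = col (g.comp f') := by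
  intro A B k
  obtain ⟨C, hC⟩ := NR A.toOrdGraph B.toOrdGraph k
  refine ⟨C.bipartiteDouble, fun col => ?_⟩
  obtain ⟨g, hg⟩ := hC (fun h => col h.liftBipartiteDouble)
  refine ⟨g.liftBipartiteDouble, fun f f' => ?_⟩
  rw [g.liftBipartiteDouble_comp f, g.liftBipartiteDouble_comp f']
  exact hg f.toOGEmb f'.toOGEmb
end
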